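/- arXiv:2307.04456 — 5 statements merged into one kernel-verified Lean document; each statement's English description precedes it below -/
import Mathlib

section
/- Let f : ℝⁿ → ℝ be differentiable with f(x) ≥ B > −∞ for all x, and suppose f is L-smooth with respect to η: f(y) ≤ f(x) + ⟨η(y,x), ∇f(x)⟩ + (L/2)‖η(y,x)‖² for all x, y. Let α ∈ (0, 2/L) and let (x_k) be any sequence satisfying η(x_{k+1}, x_k) = −α∇f(x_k) for all k. Then ∑_{k=0}^∞ ‖∇f(x_k)‖² ≤ (f(x₀) − B)/(α(1 − Lα/2)); in particular ‖∇f(x_k)‖ → 0 as k → ∞. -/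
open RealInnerProductSpace Filter

theorem invex_gd_L_smooth_convergence (n : ℕ) (f : EuclideanSpace ℝ (Fin n) → ℝ)
    (η : EuclideanSpace ℝ (Fin n) → EuclideanSpace ℝ (Fin n) → EuclideanSpace ℝ (Fin n))
    (L B α : ℝ) (hB : ∀ x, f x ≥ B)
    (hdiff : Differentiable ℝ f)
    (hsmooth : ∀ x y, f y ≤ f x + ⟪η y x, gradient f x⟫ + (L / 2) * ‖η y x‖ ^ 2)
    (hα : α ∈ Set.Ioo (0 : ℝ) (2 / L))
    (x : ℕ → EuclideanSpace ℝ (Fin n))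
    (hupdate : ∀ k, η (x (k + 1)) (x k) = -α • gradient f (x k)) :
    (∀ T : ℕ, ∑ k ∈ Finset.range T, ‖gradient f (x k)‖ ^ 2 ≤
        (f (x 0) - B) / (α * (1 - L * α / 2))) ∧
    Tendsto (fun k => ‖gradient f (x k)‖) atTop (nhds 0) := by
  obtain ⟨hα0, hα2⟩ := hα
  have hL : 0 < L := by
    by_contra h
    push_neg at h
    have : 2 / L ≤ 0 := div_nonpos_of_nonneg_of_nonpos (by norm_num) h
    linarith
  have hLα : L * α < 2 := by
    have := (lt_div_iff₀ hL).mp hα2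
    linarith
  set c : ℝ := α * (1 - L * α / 2) with hc_def
  have hc : 0 < c := by
    apply mul_pos hα0
    nlinarith
  have step : ∀ k, f (x (k + 1)) ≤ f (x k) - c * ‖gradient f (x k)‖ ^ 2 := by
    intro k
    have h := hsmooth (x k) (x (k + 1))
    rw [hupdate k] at h
    have h1 : ⟪(-α : ℝ) • gradient f (x k), gradient f (x k)⟫ =
        -α * ‖gradient f (x k)‖ ^ 2 := by
      rw [real_inner_smul_left, real_inner_self_eq_norm_sq]
    have h2 : ‖(-α : ℝ) • gradient f (x k)‖ ^ 2 = α ^ 2 * ‖gradient f (x k)‖ ^ 2 := by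
      rw [norm_smul, mul_pow]
      congr 1
      rw [Real.norm_eq_abs, abs_neg, abs_of_pos hα0]
    rw [h1, h2] at h
    nlinarith [h]
  have partial_bound : ∀ T : ℕ, c * ∑ k ∈ Finset.range T, ‖gradient f (x k)‖ ^ 2 ≤
      f (x 0) - f (x T) := by
    intro T
    induction T with
    | zero => simp
    | succ T ih =>
      rw [Finset.sum_range_succ, mul_add]
      have := step T
      linarith
  have bound : ∀ T : ℕ, ∑ k ∈ Finset.range T, ‖gradient f (x k)‖ ^ 2 ≤
      (f (x 0) - B) / c := by
    intro T
    rw [le_div_iff₀ hc, mul_comm]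
    have := partial_bound T
    have := hB (x T)
    linarith
  refine ⟨bound, ?_⟩
  have hsum : Summable (fun k => ‖gradient f (x k)‖ ^ 2) :=
    summable_of_sum_range_le (fun k => sq_nonneg _) bound
  have htend : Tendsto (fun k => ‖gradient f (x k)‖ ^ 2) atTop (nhds 0) :=
    hsum.tendsto_atTop_zero
  have h3 := (Real.continuous_sqrt.tendsto 0).comp htend
  have h4 : (fun k => ‖gradient f (x k)‖) =
      (fun t => Real.sqrt t) ∘ (fun k => ‖gradient f (x k)‖ ^ 2) :=
    funext fun k => (Real.sqrt_sq (norm_nonneg _)).symm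
  rw [h4]
  simpa using h3
end

section
/- Let f : ℝⁿ → ℝ be differentiable, L-smooth with respect to η, and η-invex (f(y) − f(x) ≥ ⟨η(y,x), ∇f(x)⟩). Suppose η satisfies the triangle inequality: ‖η(y,z)‖² ≤ ‖η(x,z)‖² + b‖η(y,x)‖² − c⟨η(y,x), η(z,x)⟩ for all x, y, z and constants b, c > 0. Let x* be a global minimizer of f with ‖η(x₀, x*)‖ ≤ M < ∞, let α ∈ (0, 2/L), and let (x_k) satisfy η(x_{k+1}, x_k) = −α∇f(x_k). Then f(x_T) − f(x*) ≤ (1/T)·(1/(cα))·(1 + bαL/(2 − Lα))·M² for all T ≥ 1. -/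
/-!
With `Δₖ = f xₖ - f x*`, `Dₖ = ‖η(xₖ, x*)‖²` and `gₖ = ∇f xₖ`, smoothness gives the descent
`α(2 - Lα)/2 ‖gₖ‖² ≤ Δₖ - Δₖ₊₁`, while the triangle inequality for `η` together with invexity
gives `Dₖ₊₁ ≤ Dₖ + bα²‖gₖ‖² - cαΔₖ`. Hence `Dₖ + (2bα/(2 - Lα)) Δₖ` decreases by at least `cαΔₖ`
per step; telescoping, using that `Δ` is antitone, and bounding `Δ₀ ≤ (L/2) D₀` (smoothness at
the minimiser, where `∇f = 0`) yields the `O(1/T)` rate.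
-/

open RealInnerProductSpace

section OneStep

variable {E : Type*} [NormedAddCommGroup E] [InnerProductSpace ℝ E]

theorem mul_norm_sq_le_sub_of_smooth {η : E → E → E} {f : E → ℝ} {x y g : E} {α L : ℝ}
    (hsmooth : f y ≤ f x + ⟪η y x, g⟫ + (L / 2) * ‖η y x‖ ^ 2) (hstep : η y x = -α • g) :
    α * (2 - L * α) / 2 * ‖g‖ ^ 2 ≤ f x - f y := by
  rw [hstep, inner_smul_left, real_inner_self_eq_norm_sq, norm_smul, mul_pow,
    Real.norm_eq_abs, sq_abs] at hsmooth
  simp only [conj_trivial] at hsmooth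
  linarith

theorem norm_sq_le_of_invex_of_triangle {η : E → E → E} {f : E → ℝ} {x y z g : E} {α b c : ℝ}
    (htri : ‖η y z‖ ^ 2 ≤ ‖η x z‖ ^ 2 + b * ‖η y x‖ ^ 2 - c * ⟪η y x, η z x⟫)
    (hinvex : ⟪η z x, g⟫ ≤ f z - f x) (hstep : η y x = -α • g) (hcα : 0 ≤ c * α) :
    ‖η y z‖ ^ 2 ≤ ‖η x z‖ ^ 2 + b * α ^ 2 * ‖g‖ ^ 2 - c * α * (f x - f z) := by
  rw [hstep, norm_smul, mul_pow, Real.norm_eq_abs, sq_abs, inner_smul_left,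
    real_inner_comm] at htri
  simp only [conj_trivial] at htri
  nlinarith [mul_le_mul_of_nonneg_left hinvex hcα]

end OneStep

theorem sub_le_of_isMin_of_smooth {E : Type*} [NormedAddCommGroup E] [InnerProductSpace ℝ E]
    [CompleteSpace E] {η : E → E → E} {f : E → ℝ} {xstar y : E} {L : ℝ}
    (hmin : ∀ y, f xstar ≤ f y)
    (hsmooth : f y ≤ f xstar + ⟪η y xstar, gradient f xstar⟫ + (L / 2) * ‖η y xstar‖ ^ 2) :
    f y - f xstar ≤ L / 2 * ‖η y xstar‖ ^ 2 := by
  have hlocal : IsLocalMin f xstar := Filter.Eventually.of_forall hmin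
  have hzero : gradient f xstar = 0 := by rw [gradient, hlocal.fderiv_eq_zero, map_zero]
  rw [hzero, inner_zero_right] at hsmooth
  linarith

theorem nat_mul_le_sum_range_of_antitone {u : ℕ → ℝ} (hu : Antitone u) (T : ℕ) :
    T * u T ≤ ∑ k ∈ Finset.range T, u k := by
  simpa using Finset.card_nsmul_le_sum (Finset.range T) u (u T)
    fun k hk ↦ hu (Finset.mem_range.mp hk).le

section Lyapunov

variable {Δ D G : ℕ → ℝ} {a B C : ℝ}

theorem sum_range_add_le_of_descent (ha : 0 < a) (hB : 0 ≤ B)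
    (hdesc : ∀ k, a * G k ≤ Δ k - Δ (k + 1))
    (hdist : ∀ k, D (k + 1) ≤ D k + B * G k - C * Δ k) (T : ℕ) :
    C * ∑ k ∈ Finset.range T, Δ k + D T + B / a * Δ T ≤ D 0 + B / a * Δ 0 := by
  induction T with
  | zero => simp
  | succ T ih =>
    have hstep : B * G T ≤ B / a * (Δ T - Δ (T + 1)) := by
      calc B * G T = B / a * (a * G T) := by field_simp
        _ ≤ B / a * (Δ T - Δ (T + 1)) := by gcongr; exact hdesc T
    rw [Finset.sum_range_succ]
    linarith [hdist T]

theorem mul_le_of_descent (ha : 0 < a) (hB : 0 ≤ B) (hC : 0 ≤ C) (hΔ : ∀ k, 0 ≤ Δ k)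
    (hD : ∀ k, 0 ≤ D k) (hG : ∀ k, 0 ≤ G k)
    (hdesc : ∀ k, a * G k ≤ Δ k - Δ (k + 1))
    (hdist : ∀ k, D (k + 1) ≤ D k + B * G k - C * Δ k) (T : ℕ) :
    C * (T * Δ T) ≤ D 0 + B / a * Δ 0 := by
  have hanti : Antitone Δ :=
    antitone_nat_of_succ_le fun k ↦ by nlinarith [hdesc k, hG k]
  calc C * (T * Δ T) ≤ C * ∑ k ∈ Finset.range T, Δ k := by
        gcongr; exact nat_mul_le_sum_range_of_antitone hanti T
    _ ≤ D 0 + B / a * Δ 0 := by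
        have := sum_range_add_le_of_descent ha hB hdesc hdist T
        nlinarith [hD T, hΔ T, div_nonneg hB ha.le]

end Lyapunov

theorem invex_gd_convergence_general (n : ℕ) (f : EuclideanSpace ℝ (Fin n) → ℝ)
    (η : EuclideanSpace ℝ (Fin n) → EuclideanSpace ℝ (Fin n) → EuclideanSpace ℝ (Fin n))
    (L b c α M : ℝ) (hb : 0 < b) (hc : 0 < c)
    (hsmooth : ∀ x y, f y ≤ f x + ⟪η y x, gradient f x⟫ + (L / 2) * ‖η y x‖ ^ 2)
    (hinvex : ∀ x y, f y - f x ≥ ⟪η y x, gradient f x⟫)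
    (htri : ∀ x y z, ‖η y z‖ ^ 2 ≤ ‖η x z‖ ^ 2 + b * ‖η y x‖ ^ 2 - c * ⟪η y x, η z x⟫)
    (xstar : EuclideanSpace ℝ (Fin n)) (hmin : ∀ y, f xstar ≤ f y)
    (x : ℕ → EuclideanSpace ℝ (Fin n))
    (hM : ‖η (x 0) xstar‖ ≤ M)
    (hα : α ∈ Set.Ioo (0 : ℝ) (2 / L))
    (hupdate : ∀ k, η (x (k + 1)) (x k) = -α • gradient f (x k)) :
    ∀ T : ℕ, 1 ≤ T →
      f (x T) - f xstar ≤ (1 / (T : ℝ)) * (1 / (c * α)) * (1 + b * α * L / (2 - L * α)) * M ^ 2 := by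
  intro T hT
  obtain ⟨hα0, hαL⟩ := hα
  have hL : 0 < L := by
    by_contra! hL
    linarith [div_nonpos_of_nonneg_of_nonpos zero_le_two hL]
  have hLα : 0 < 2 - L * α := by linarith [(lt_div_iff₀' hL).mp hαL]
  have hrate := mul_le_of_descent (Δ := fun k ↦ f (x k) - f xstar)
    (D := fun k ↦ ‖η (x k) xstar‖ ^ 2) (G := fun k ↦ ‖gradient f (x k)‖ ^ 2)
    (a := α * (2 - L * α) / 2) (B := b * α ^ 2) (C := c * α) (by positivity) (by positivity)
    (by positivity) (fun k ↦ sub_nonneg.mpr (hmin _)) (fun k ↦ by positivity)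
    (fun k ↦ by positivity)
    (fun k ↦ (mul_norm_sq_le_sub_of_smooth (hsmooth _ _) (hupdate k)).trans_eq (by ring))
    (fun k ↦ norm_sq_le_of_invex_of_triangle (htri _ _ _) (hinvex _ _)
      (hupdate k) (by positivity)) T
  have hD0 : ‖η (x 0) xstar‖ ^ 2 ≤ M ^ 2 := pow_le_pow_left₀ (norm_nonneg _) hM 2
  have hΔ0 : f (x 0) - f xstar ≤ L / 2 * M ^ 2 :=
    (sub_le_of_isMin_of_smooth hmin (hsmooth xstar (x 0))).trans (by gcongr)
  have hT0 : (0 : ℝ) < T := by exact_mod_cast hT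
  rw [show (1 / (T : ℝ)) * (1 / (c * α)) * (1 + b * α * L / (2 - L * α)) * M ^ 2
      = (1 + b * α * L / (2 - L * α)) * M ^ 2 / (c * α * T) by field_simp,
    le_div_iff₀ (by positivity)]
  calc (f (x T) - f xstar) * (c * α * T) = c * α * (T * (f (x T) - f xstar)) := by ring
    _ ≤ ‖η (x 0) xstar‖ ^ 2 + b * α ^ 2 / (α * (2 - L * α) / 2) * (f (x 0) - f xstar) := hrate
    _ ≤ M ^ 2 + b * α ^ 2 / (α * (2 - L * α) / 2) * (L / 2 * M ^ 2) := by gcongr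
    _ = (1 + b * α * L / (2 - L * α)) * M ^ 2 := by field_simp

theorem invex_gd_convergence (n : ℕ) (f : EuclideanSpace ℝ (Fin n) → ℝ)
    (η : EuclideanSpace ℝ (Fin n) → EuclideanSpace ℝ (Fin n) → EuclideanSpace ℝ (Fin n))
    (L b c α M : ℝ) (hb : 0 < b) (hc : 0 < c)
    (hdiff : Differentiable ℝ f)
    (hsmooth : ∀ x y, f y ≤ f x + ⟪η y x, gradient f x⟫ + (L / 2) * ‖η y x‖ ^ 2)
    (hinvex : ∀ x y, f y - f x ≥ ⟪η y x, gradient f x⟫)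
    (htri : ∀ x y z, ‖η y z‖ ^ 2 ≤ ‖η x z‖ ^ 2 + b * ‖η y x‖ ^ 2 - c * ⟪η y x, η z x⟫)
    (xstar : EuclideanSpace ℝ (Fin n)) (hmin : ∀ y, f xstar ≤ f y)
    (x : ℕ → EuclideanSpace ℝ (Fin n))
    (hM : ‖η (x 0) xstar‖ ≤ M)
    (hα : α ∈ Set.Ioo (0 : ℝ) (2 / L))
    (hupdate : ∀ k, η (x (k + 1)) (x k) = -α • gradient f (x k)) :
    ∀ T : ℕ, 1 ≤ T →
      f (x T) - f xstar ≤ (1 / (T : ℝ)) * (1 / (c * α)) * (1 + b * α * L / (2 - L * α)) * M ^ 2 :=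
  invex_gd_convergence_general n f η L b c α M hb hc hsmooth hinvex htri xstar hmin x hM hα hupdate
end

section
/- Let W be the set of d×d real matrices W with spectral radius of W∘W less than 1, where ∘ denotes the Hadamard product, and assume all entries of W are nonzero. Define h(W) = −log det(I − W∘W) and η(U,W) = −½((I − W∘W)(log(I − U∘U) − log(I − W∘W))) ⊘ W, where ⊘ is entrywise division and log is the matrix logarithm. Then, assuming I − W∘W and I − U∘U commute with each other's logarithms appropriately (e.g., all matrices involved are simultaneously diagonalizable), h(U) − h(W) − ⟨η(U,W), ∇h(W)⟩ = 0, where ∇h(W) = 2(I − W∘W)^{−⊤} ∘ W and ⟨·,·⟩ is the trace/Frobenius inner product. In particular, h is η-invex. -/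
open Matrix

noncomputable section

/-- entrywise (Hadamard) division, with convention a/0 = 0. -/
def hdiv {d : ℕ} (A B : Matrix (Fin d) (Fin d) ℝ) : Matrix (Fin d) (Fin d) ℝ :=
  Matrix.of fun i j => if B i j = 0 then 0 else A i j / B i j

/-- Frobenius / trace inner product. -/
def fip {d : ℕ} (A B : Matrix (Fin d) (Fin d) ℝ) : ℝ := (Aᵀ * B).trace

/-!
Since `det (exp L) = exp (tr L)` (the function `t ↦ det (exp (t • L))` solves `f' = tr L • f`
by Jacobi's formula), `h V = -tr (log (I - V ∘ V))`. In `⟨η, ∇h W⟩` the division by `W` in `η`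
cancels the factor `W` in `∇h W`, leaving `-tr ((I - W ∘ W)⁻¹ (I - W ∘ W) (log B - log A))`
with `A = I - W ∘ W`, `B = I - U ∘ U`, which is `tr (log A) - tr (log B) = h U - h W`.
-/

theorem eq_mul_exp_of_hasDerivAt {f : ℝ → ℝ} {c : ℝ} (hf : ∀ t, HasDerivAt f (c * f t) t)
    (t : ℝ) : f t = f 0 * Real.exp (c * t) := by
  have hconst (s : ℝ) : HasDerivAt (fun s => f s * Real.exp (-c * s)) 0 s := by
    have he : HasDerivAt (fun s => Real.exp (-c * s)) (Real.exp (-c * s) * -c) s := by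
      simpa using ((hasDerivAt_id s).const_mul (-c)).exp
    exact ((hf s).mul he).congr_deriv (by ring)
  have := is_const_of_deriv_eq_zero (fun s => (hconst s).differentiableAt)
    (fun s => (hconst s).deriv) t 0
  rw [mul_zero, Real.exp_zero, mul_one] at this
  rw [← this, mul_assoc, ← Real.exp_add, neg_mul, neg_add_cancel, Real.exp_zero, mul_one]

namespace Matrix

variable {n : Type*} [Fintype n] [DecidableEq n]

theorem sum_det_updateRow_mul {R : Type*} [CommRing R] (A N : Matrix n n R) :
    ∑ i, (A.updateRow i ((N * A) i)).det = N.trace * A.det := by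
  have hrow (i : n) : (N * A) i = ∑ k, N i k • A k := by
    ext j
    simp [mul_apply, Finset.sum_apply]
  simp only [hrow, det_updateRow_sum, trace, diag, Finset.sum_mul]
  simp

def detRowContinuousMultilinear (n : Type*) [Fintype n] [DecidableEq n] :
    ContinuousMultilinearMap ℝ (fun _ : n => n → ℝ) ℝ where
  toMultilinearMap := (detRowAlternating : (n → ℝ) [⋀^n]→ₗ[ℝ] ℝ).toMultilinearMap
  cont := continuous_id.matrix_det

theorem hasDerivAt_det {f : ℝ → Matrix n n ℝ} {f' : Matrix n n ℝ} {t : ℝ}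
    (hf : ∀ i j, HasDerivAt (fun s => f s i j) (f' i j) t) :
    HasDerivAt (fun s => (f s).det) (∑ i, ((f t).updateRow i (f' i)).det) t := by
  have hrows : HasDerivAt (fun s => fun i => f s i : ℝ → n → n → ℝ) (fun i => f' i) t :=
    hasDerivAt_pi.2 fun i => hasDerivAt_pi.2 (hf i)
  have := ((detRowContinuousMultilinear n).hasFDerivAt fun i => f t i).comp_hasDerivAt t hrows
  rw [ContinuousMultilinearMap.linearDeriv_apply] at this
  exact this

section exp

-- `NormedSpace.exp` only depends on the topology; a normed algebra structure is needed to
-- differentiate it, and any one will do.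
attribute [local instance] Matrix.linftyOpNormedRing Matrix.linftyOpNormedAlgebra

theorem hasDerivAt_exp_smul_apply (M : Matrix n n ℝ) (t : ℝ) (i j : n) :
    HasDerivAt (fun s : ℝ => NormedSpace.exp (s • M) i j)
      ((M * NormedSpace.exp (t • M)) i j) t := by
  let entry : Matrix n n ℝ →L[ℝ] ℝ :=
    LinearMap.toContinuousLinearMap
      ((LinearMap.proj (R := ℝ) j).comp (LinearMap.proj (R := ℝ) (φ := fun _ : n => n → ℝ) i))
  exact entry.hasFDerivAt.comp_hasDerivAt t (hasDerivAt_exp_smul_const' M t)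

end exp

theorem det_exp (M : Matrix n n ℝ) : (NormedSpace.exp M).det = Real.exp M.trace := by
  have hderiv (t : ℝ) : HasDerivAt (fun s : ℝ => (NormedSpace.exp (s • M)).det)
      (M.trace * (NormedSpace.exp (t • M)).det) t := by
    rw [← sum_det_updateRow_mul]
    exact hasDerivAt_det (hasDerivAt_exp_smul_apply M t)
  simpa using eq_mul_exp_of_hasDerivAt hderiv 1

end Matrix

section Frobenius

variable {d : ℕ}

theorem fip_smul_left (c : ℝ) (A B : Matrix (Fin d) (Fin d) ℝ) :
    fip (c • A) B = c * fip A B := by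
  simp [fip, trace_smul]

theorem fip_smul_right (c : ℝ) (A B : Matrix (Fin d) (Fin d) ℝ) :
    fip A (c • B) = c * fip A B := by
  simp [fip, trace_smul]

theorem fip_transpose_right (A B : Matrix (Fin d) (Fin d) ℝ) : fip A Bᵀ = (B * A).trace := by
  rw [fip, ← transpose_mul, trace_transpose]

theorem fip_hdiv_hadamard {W : Matrix (Fin d) (Fin d) ℝ} (hW : ∀ i j, W i j ≠ 0)
    (A B : Matrix (Fin d) (Fin d) ℝ) : fip (hdiv A W) (B.hadamard W) = fip A B := by
  simp only [fip, trace, diag, mul_apply, transpose_apply, hdiv, of_apply, hadamard_apply,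
    if_neg (hW _ _)]
  refine Finset.sum_congr rfl fun i _ => Finset.sum_congr rfl fun j _ => ?_
  field_simp [hW j i]

end Frobenius

theorem dagma_h_invex_general (d : ℕ) (W U : Matrix (Fin d) (Fin d) ℝ)
    (mlog : Matrix (Fin d) (Fin d) ℝ → Matrix (Fin d) (Fin d) ℝ)
    -- all entries of W are nonzero
    (hWnz : ∀ i j, W i j ≠ 0)
    -- mlog is a matrix logarithm on the matrices involved
    (hlogW : NormedSpace.exp (mlog (1 - W.hadamard W)) = 1 - W.hadamard W)
    (hlogU : NormedSpace.exp (mlog (1 - U.hadamard U)) = 1 - U.hadamard U)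
    -- h and η and the gradient of h
    (h : Matrix (Fin d) (Fin d) ℝ → ℝ)
    (hh : ∀ V : Matrix (Fin d) (Fin d) ℝ, h V = -Real.log (1 - V.hadamard V).det)
    (η gradh : Matrix (Fin d) (Fin d) ℝ)
    (hη : η = hdiv ((-(1/2) : ℝ) •
      ((1 - W.hadamard W) * (mlog (1 - U.hadamard U) - mlog (1 - W.hadamard W)))) W)
    (hgrad : gradh = (2 : ℝ) • (((1 - W.hadamard W)⁻¹)ᵀ.hadamard W)) :
    h U - h W - fip η gradh = 0 := by
  set A := 1 - W.hadamard W
  set B := 1 - U.hadamard U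
  have hdetA : A.det = Real.exp (mlog A).trace := by rw [← det_exp, hlogW]
  have hdetB : B.det = Real.exp (mlog B).trace := by rw [← det_exp, hlogU]
  have hA : A⁻¹ * A = 1 := nonsing_inv_mul A (hdetA ▸ (Real.exp_pos _).ne'.isUnit)
  rw [hh, hh, hdetA, hdetB, Real.log_exp, Real.log_exp, hη, hgrad, fip_smul_right,
    fip_hdiv_hadamard hWnz, fip_smul_left, fip_transpose_right, ← Matrix.mul_assoc, hA, one_mul,
    trace_sub]
  ring

theorem dagma_h_invex (d : ℕ) (W U : Matrix (Fin d) (Fin d) ℝ)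
    (mlog : Matrix (Fin d) (Fin d) ℝ → Matrix (Fin d) (Fin d) ℝ)
    -- all entries of W are nonzero
    (hWnz : ∀ i j, W i j ≠ 0)
    -- spectral radius of W ∘ W (resp. U ∘ U) is less than 1
    (hWρ : ∀ μ ∈ spectrum ℂ ((W.hadamard W).map (algebraMap ℝ ℂ)), ‖μ‖ < 1)
    (hUρ : ∀ μ ∈ spectrum ℂ ((U.hadamard U).map (algebraMap ℝ ℂ)), ‖μ‖ < 1)
    -- mlog is a matrix logarithm on the matrices involved
    (hlogW : NormedSpace.exp (mlog (1 - W.hadamard W)) = 1 - W.hadamard W)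
    (hlogU : NormedSpace.exp (mlog (1 - U.hadamard U)) = 1 - U.hadamard U)
    -- simultaneous diagonalizability surrogate: everything in sight commutes
    (hcomm₁ : Commute (1 - W.hadamard W) (1 - U.hadamard U))
    (hcomm₂ : Commute (1 - W.hadamard W) (mlog (1 - U.hadamard U)))
    (hcomm₃ : Commute (1 - W.hadamard W) (mlog (1 - W.hadamard W)))
    (hcomm₄ : Commute (mlog (1 - U.hadamard U)) (mlog (1 - W.hadamard W)))
    -- h and η and the gradient of h
    (h : Matrix (Fin d) (Fin d) ℝ → ℝ)
    (hh : ∀ V : Matrix (Fin d) (Fin d) ℝ, h V = -Real.log (1 - V.hadamard V).det)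
    (η gradh : Matrix (Fin d) (Fin d) ℝ)
    (hη : η = hdiv ((-(1/2) : ℝ) •
      ((1 - W.hadamard W) * (mlog (1 - U.hadamard U) - mlog (1 - W.hadamard W)))) W)
    (hgrad : gradh = (2 : ℝ) • (((1 - W.hadamard W)⁻¹)ᵀ.hadamard W)) :
    h U - h W - fip η gradh = 0 :=
  dagma_h_invex_general d W U mlog hWnz hlogW hlogU h hh η gradh hη hgrad
end
end

section
/- Fix n and symmetric matrices S₁,…,S_n ∈ ℝ^{(d+1)×(d+1)}. Define f(t, W, U) = ∑_{i=1}^n ½⟨S_i, W + U⟩ + ½ t_i ⟨S_i, W − U⟩ for t ∈ ℝⁿ and symmetric W, U. Let (t̃, W̃, Ũ) satisfy ⟨S_i, W̃ − Ũ⟩ ≠ 0 for all i, and define η₁((t,W,U),(t̃,W̃,Ũ)) = (τ ∘ (t − t̃), W − W̃, U − Ũ) with τ_i = ⟨S_i, W − U⟩/⟨S_i, W̃ − Ũ⟩. Then f(t,W,U) − f(t̃,W̃,Ũ) − ⟨η₁((t,W,U),(t̃,W̃,Ũ)), ∇f(t̃,W̃,Ũ)⟩ = 0; in particular f is η₁-invex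 at such points. -/
open Matrix

noncomputable section

lemma fip_comm {d : ℕ} (A B : Matrix (Fin d) (Fin d) ℝ) : fip A B = fip B A := by
  unfold fip
  rw [← Matrix.trace_transpose (Aᵀ * B), Matrix.transpose_mul, Matrix.transpose_transpose]

lemma fip_add {d : ℕ} (A B C : Matrix (Fin d) (Fin d) ℝ) :
    fip A (B + C) = fip A B + fip A C := by
  simp [fip, Matrix.mul_add]

lemma fip_sub {d : ℕ} (A B C : Matrix (Fin d) (Fin d) ℝ) :
    fip A (B - C) = fip A B - fip A C := by
  simp [fip, Matrix.mul_sub]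

lemma fip_smul {d : ℕ} (c : ℝ) (A B : Matrix (Fin d) (Fin d) ℝ) :
    fip A (c • B) = c * fip A B := by
  simp [fip, Matrix.mul_smul]

lemma fip_sum {d n : ℕ} (A : Matrix (Fin d) (Fin d) ℝ)
    (B : Fin n → Matrix (Fin d) (Fin d) ℝ) :
    fip A (∑ i, B i) = ∑ i, fip A (B i) := by
  simp [fip, Matrix.mul_sum]

theorem mlr_eta_invex (n d : ℕ)
    (S : Fin n → Matrix (Fin (d + 1)) (Fin (d + 1)) ℝ)
    (hS : ∀ i, (S i).IsSymm)
    (f : (Fin n → ℝ) → Matrix (Fin (d + 1)) (Fin (d + 1)) ℝ →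
      Matrix (Fin (d + 1)) (Fin (d + 1)) ℝ → ℝ)
    (hf : ∀ t W U, f t W U =
      ∑ i, ((1 / 2) * fip (S i) (W + U) + (1 / 2) * t i * fip (S i) (W - U)))
    (t t' : Fin n → ℝ) (W U W' U' : Matrix (Fin (d + 1)) (Fin (d + 1)) ℝ)
    (hW : W.IsSymm) (hU : U.IsSymm) (hW' : W'.IsSymm) (hU' : U'.IsSymm)
    (hne : ∀ i, fip (S i) (W' - U') ≠ 0)
    (τ : Fin n → ℝ) (hτ : ∀ i, τ i = fip (S i) (W - U) / fip (S i) (W' - U')) :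
    f t W U - f t' W' U' -
      ((∑ i, τ i * (t i - t' i) * ((1 / 2) * fip (S i) (W' - U'))) +
        fip (W - W') (∑ i, ((t' i + 1) / 2) • S i) +
        fip (U - U') (∑ i, ((1 - t' i) / 2) • S i)) = 0 := by
  rw [hf, hf]
  rw [fip_sum, fip_sum]
  simp only [fip_smul]
  rw [← Finset.sum_sub_distrib, ← Finset.sum_add_distrib, ← Finset.sum_add_distrib,
    ← Finset.sum_sub_distrib]
  rw [Finset.sum_eq_zero]
  intro i _
  rw [hτ i]
  rw [fip_comm (W - W'), fip_comm (U - U')]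
  have hb := hne i
  simp only [fip_add, fip_sub] at *
  field_simp
  ring
end
end

section
/- Let φ : ℝ → ℝ be differentiable and suppose for each x, y ∈ ℝ there is a differentiable curve γ_{x,y} : [0,1] → ℝ with γ_{x,y}(0) = x, γ_{x,y}(1) = y such that t ↦ φ(γ_{x,y}(t)) is convex on [0,1] and η(y,x) := γ̇_{x,y}(0) is well-defined. Then φ is η-invex: φ(y) − φ(x) ≥ η(y,x)·φ'(x) for all x, y. -/
open Set

theorem invex_of_convex_along_curves (φ : ℝ → ℝ)
    (γ : ℝ → ℝ → ℝ → ℝ) (η : ℝ → ℝ → ℝ)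
    (hφ : Differentiable ℝ φ)
    (hγdiff : ∀ x y, Differentiable ℝ (γ x y))
    (hγ0 : ∀ x y, γ x y 0 = x) (hγ1 : ∀ x y, γ x y 1 = y)
    (hconv : ∀ x y, ConvexOn ℝ (Set.Icc (0 : ℝ) 1) (fun t => φ (γ x y t)))
    (hη : ∀ x y, η y x = deriv (γ x y) 0) :
    ∀ x y, φ y - φ x ≥ η y x * deriv φ x := by
  intro x y
  have hchain : HasDerivAt (fun t => φ (γ x y t)) (deriv φ x * η y x) 0 := by
    rw [hη]
    exact (hφ x).hasDerivAt.comp_of_eq 0 (hγdiff x y 0).hasDerivAt (hγ0 x y).symm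
  have hslope := (hconv x y).le_slope_of_hasDerivAt (left_mem_Icc.2 zero_le_one)
    (right_mem_Icc.2 zero_le_one) zero_lt_one hchain
  rwa [slope_def_field, hγ0, hγ1, sub_zero, div_one, mul_comm] at hslope
end
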